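/- arXiv:2303.11710 — 4 statements merged into one kernel-verified Lean document; each statement's English description precedes it below -/
import Mathlib

section
/- Let f : R → S be a homomorphism of commutative rings and g, h : S → T two ring homomorphisms with g ∘ f = h ∘ f. Let ξ ∈ R be a nonzerodivisor whose images f(ξ) ∈ S and g(f(ξ)) ∈ T are also nonzerodivisors. If the induced diagram R/(ξ) → S/(ξ) ⇉ T/(ξ) is an equalizer diagram of rings, then for every n ≥ 1 the induced diagram R/(ξⁿ) → S/(ξⁿ) ⇉ T/(ξⁿ) is an equalizer diagram. -/
/-!
Modulo a principal ideal `(a)`, the equalizer condition says that `f` reflects divisibility by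
`a` and that elements of `S` equalized by `g, h` modulo `a` lift to `R` modulo `a`. Both
properties pass from `a` and `b` to `a * b` once `f a`, resp. `g (f a)`, is a nonzerodivisor:
cancelling that factor reduces the problem to the property for `b`. Taking `a = ξⁿ`, `b = ξ`
gives the induction on `n`.
-/

/-- A diagram of commutative rings `R → S ⇉ T`, given by `f : R →+* S` and a parallel pair
`g h : S →+* T`, is an *equalizer diagram* if `f` is injective and its image is exactly the
set of elements of `S` on which `g` and `h` agree. -/
def IsEqualizerDiagram {R S T : Type*} [CommRing R] [CommRing S] [CommRing T]
    (f : R →+* S) (g h : S →+* T) : Prop :=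
  Function.Injective f ∧ Set.range f = {s | g s = h s}

section

variable {R S T : Type*} [CommRing R] [CommRing S] [CommRing T]

theorem isEqualizerDiagram_quotientMap_iff (f : R →+* S) (g h : S →+* T)
    (hgf : g.comp f = h.comp f) {I : Ideal R} {J : Ideal S} {K : Ideal T}
    (hIJ : I ≤ J.comap f) (hJKg : J ≤ K.comap g) (hJKh : J ≤ K.comap h) :
    IsEqualizerDiagram (Ideal.quotientMap J f hIJ) (Ideal.quotientMap K g hJKg)
        (Ideal.quotientMap K h hJKh) ↔
      (∀ r, f r ∈ J → r ∈ I) ∧ ∀ s, g s - h s ∈ K → ∃ r, s - f r ∈ J := by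
  simp only [IsEqualizerDiagram, injective_iff_map_eq_zero, Set.ext_iff, Set.mem_range,
    Set.mem_ofPred_eq, Ideal.Quotient.mk_surjective.forall, Ideal.Quotient.mk_surjective.exists,
    Ideal.quotientMap_mk, Ideal.Quotient.eq_zero_iff_mem, Ideal.Quotient.eq]
  have mem_of_lift (s : S) (r : R) (hr : f r - s ∈ J) : g s - h s ∈ K := by
    have hfr : g (f r) = h (f r) := RingHom.congr_fun hgf r
    have : g s - h s = h (f r - s) - g (f r - s) := by simp only [map_sub, hfr]; ring
    exact this ▸ K.sub_mem (hJKh hr) (hJKg hr)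
  refine and_congr_right' (forall_congr' fun s => ⟨fun H hs => ?_, fun H => ?_⟩)
  · obtain ⟨r, hr⟩ := H.2 hs
    exact ⟨r, sub_mem_comm_iff.1 hr⟩
  · exact ⟨fun ⟨r, hr⟩ => mem_of_lift s r hr,
      fun hs => (H hs).imp fun _ => sub_mem_comm_iff.1⟩

variable (f : R →+* S) (g h : S →+* T)

-- Together, `ReflectsDvd f a` and `LiftsEqualizerMod f g h a` say that `R/(a) → S/(a) ⇉ T/(a)`
-- is an equalizer diagram (`isEqualizerDiagram_quotientMap_iff` for principal ideals).
def ReflectsDvd (a : R) : Prop :=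
  ∀ r, f a ∣ f r → a ∣ r

def LiftsEqualizerMod (a : R) : Prop :=
  ∀ s, g (f a) ∣ g s - h s → ∃ r, f a ∣ s - f r

variable {f g h}

open nonZeroDivisors

theorem ReflectsDvd.mul {a b : R} (ha : f a ∈ S⁰) (hA : ReflectsDvd f a)
    (hB : ReflectsDvd f b) : ReflectsDvd f (a * b) := by
  rintro r ⟨s, hs⟩
  obtain ⟨r', rfl⟩ := hA r ⟨f b * s, by rw [hs, map_mul, mul_assoc]⟩
  have hr' : f r' = f b * s := by
    rw [map_mul, map_mul, mul_assoc] at hs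
    exact (mul_cancel_left_mem_nonZeroDivisors ha).1 hs
  obtain ⟨r'', rfl⟩ := hB r' ⟨s, hr'⟩
  exact ⟨r'', by ring⟩

theorem ReflectsDvd.pow {a : R} (ha : f a ∈ S⁰) (hbase : ReflectsDvd f a) :
    ∀ n : ℕ, ReflectsDvd f (a ^ n)
  | 0 => fun r _ => by simp
  | n + 1 => by
    rw [pow_succ]
    exact (hbase.pow ha n).mul (by rw [map_pow]; exact pow_mem ha n) hbase

theorem LiftsEqualizerMod.mul (hgf : g.comp f = h.comp f) {a b : R} (ha : g (f a) ∈ T⁰)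
    (hA : LiftsEqualizerMod f g h a) (hB : LiftsEqualizerMod f g h b) :
    LiftsEqualizerMod f g h (a * b) := by
  rintro s ⟨t, ht⟩
  obtain ⟨r, s', hs'⟩ := hA s ⟨g (f b) * t, by rw [ht, map_mul, map_mul, mul_assoc]⟩
  have hfa : g (f a) = h (f a) := RingHom.congr_fun hgf a
  have hfr : g (f r) = h (f r) := RingHom.congr_fun hgf r
  have hs'_eq : g s' - h s' = g (f b) * t := by
    refine (mul_cancel_left_mem_nonZeroDivisors ha).1 ?_
    have hs : s = f r + f a * s' := by rw [← hs']; ring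
    calc g (f a) * (g s' - h s') = g s - h s := by
          rw [hs, map_add, map_add, map_mul, map_mul, hfr, hfa]; ring
      _ = g (f a) * (g (f b) * t) := by rw [ht, map_mul, map_mul, mul_assoc]
  obtain ⟨r', u, hu⟩ := hB s' ⟨t, hs'_eq⟩
  exact ⟨r + a * r', u, by rw [map_add, map_mul, map_mul]; linear_combination hs' + f a * hu⟩

theorem LiftsEqualizerMod.pow (hgf : g.comp f = h.comp f) {a : R} (ha : g (f a) ∈ T⁰)
    (hbase : LiftsEqualizerMod f g h a) : ∀ n : ℕ, LiftsEqualizerMod f g h (a ^ n)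
  | 0 => fun s _ => ⟨0, by simp⟩
  | n + 1 => by
    rw [pow_succ]
    exact (hbase.pow hgf ha n).mul hgf (by rw [map_pow, map_pow]; exact pow_mem ha n) hbase

end

/-- If `R → S ⇉ T` commutes, `ξ ∈ R` is a nonzerodivisor whose images in `S` and `T` are
nonzerodivisors, and the induced diagram modulo `ξ` is an equalizer diagram, then the induced
diagram modulo `ξⁿ` is an equalizer diagram for every `n ≥ 1`. -/
theorem statement0 {R S T : Type*} [CommRing R] [CommRing S] [CommRing T]
    (f : R →+* S) (g h : S →+* T) (hgf : g.comp f = h.comp f)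
    (ξ : R) (hfξ : f ξ ∈ nonZeroDivisors S)
    (hgfξ : g (f ξ) ∈ nonZeroDivisors T)
    (H1 : IsEqualizerDiagram
      (Ideal.quotientMap (Ideal.span {f ξ}) f (by
        rw [Ideal.span_le, Set.singleton_subset_iff, SetLike.mem_coe, Ideal.mem_comap]
        exact Ideal.subset_span rfl))
      (Ideal.quotientMap (Ideal.span {g (f ξ)}) g (by
        rw [Ideal.span_le, Set.singleton_subset_iff, SetLike.mem_coe, Ideal.mem_comap]
        exact Ideal.subset_span rfl))
      (Ideal.quotientMap (Ideal.span {g (f ξ)}) h (by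
        have e : g (f ξ) = h (f ξ) := RingHom.congr_fun hgf ξ
        rw [Ideal.span_le, Set.singleton_subset_iff, SetLike.mem_coe, Ideal.mem_comap, ← e]
        exact Ideal.subset_span rfl))) :
    ∀ n : ℕ, 1 ≤ n → IsEqualizerDiagram
      (Ideal.quotientMap (Ideal.span {f ξ ^ n}) f (by
        rw [Ideal.span_le, Set.singleton_subset_iff, SetLike.mem_coe, Ideal.mem_comap, map_pow]
        exact Ideal.subset_span rfl))
      (Ideal.quotientMap (Ideal.span {g (f ξ) ^ n}) g (by
        rw [Ideal.span_le, Set.singleton_subset_iff, SetLike.mem_coe, Ideal.mem_comap, map_pow]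
        exact Ideal.subset_span rfl))
      (Ideal.quotientMap (Ideal.span {g (f ξ) ^ n}) h (by
        have e : g (f ξ) = h (f ξ) := RingHom.congr_fun hgf ξ
        rw [Ideal.span_le, Set.singleton_subset_iff, SetLike.mem_coe, Ideal.mem_comap, map_pow,
          ← e]
        exact Ideal.subset_span rfl)) := by
  intro n _
  obtain ⟨hreflects, hlifts⟩ := (isEqualizerDiagram_quotientMap_iff f g h hgf _ _ _).1 H1
  simp only [Ideal.mem_span_singleton] at hreflects hlifts
  refine (isEqualizerDiagram_quotientMap_iff f g h hgf _ _ _).2 ?_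
  simp only [Ideal.mem_span_singleton, ← map_pow]
  exact ⟨ReflectsDvd.pow hfξ hreflects n, LiftsEqualizerMod.pow hgf hgfξ hlifts n⟩
end

section
/- Let f : R → S be a homomorphism of commutative rings and g, h : S → T two ring homomorphisms with g ∘ f = h ∘ f. Let ξ ∈ R, and suppose R, S and T are each adically complete with respect to the ideal generated by (the image of) ξ. If for every n ≥ 1 the induced diagram R/(ξⁿ) → S/(ξⁿ) ⇉ T/(ξⁿ) is an equalizer diagram of rings, then R → S ⇉ T is itself an equalizer diagram. -/
/-- If `R → S ⇉ T` commutes, `R`, `S`, `T` are adically complete with respect to the ideal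
generated by (the image of) `ξ`, and the induced diagram modulo `ξⁿ` is an equalizer diagram
for every `n ≥ 1`, then `R → S ⇉ T` is an equalizer diagram. -/
theorem statement1 {R S T : Type*} [CommRing R] [CommRing S] [CommRing T]
    (f : R →+* S) (g h : S →+* T) (hgf : g.comp f = h.comp f) (ξ : R)
    [IsAdicComplete (Ideal.span {ξ}) R]
    [IsAdicComplete (Ideal.span {f ξ}) S]
    [IsAdicComplete (Ideal.span {g (f ξ)}) T]
    (H : ∀ n : ℕ, 1 ≤ n → IsEqualizerDiagram
      (Ideal.quotientMap (Ideal.span {f ξ ^ n}) f (by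
        rw [Ideal.span_le, Set.singleton_subset_iff, SetLike.mem_coe, Ideal.mem_comap, map_pow]
        exact Ideal.subset_span rfl))
      (Ideal.quotientMap (Ideal.span {g (f ξ) ^ n}) g (by
        rw [Ideal.span_le, Set.singleton_subset_iff, SetLike.mem_coe, Ideal.mem_comap, map_pow]
        exact Ideal.subset_span rfl))
      (Ideal.quotientMap (Ideal.span {g (f ξ) ^ n}) h (by
        have e : g (f ξ) = h (f ξ) := RingHom.congr_fun hgf ξ
        rw [Ideal.span_le, Set.singleton_subset_iff, SetLike.mem_coe, Ideal.mem_comap, map_pow,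
          ← e]
        exact Ideal.subset_span rfl))) :
    IsEqualizerDiagram f g h := by
  have keyR : ∀ n : ℕ, (Ideal.span {ξ} : Ideal R) ^ n • (⊤ : Submodule R R)
      = Ideal.span {ξ ^ n} := fun n => by
    rw [smul_eq_mul, Ideal.mul_top, Ideal.span_singleton_pow]
  have keyS : ∀ n : ℕ, (Ideal.span {f ξ} : Ideal S) ^ n • (⊤ : Submodule S S)
      = Ideal.span {f ξ ^ n} := fun n => by
    rw [smul_eq_mul, Ideal.mul_top, Ideal.span_singleton_pow]
  constructor
  · -- injectivity
    intro a b hab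
    rw [← sub_eq_zero]
    refine IsHausdorff.haus (IsAdicComplete.toIsHausdorff (I := Ideal.span {ξ})) _ fun n => ?_
    rw [SModEq.zero, keyR n]
    rcases Nat.eq_zero_or_pos n with rfl | hn
    · simp [Ideal.span_singleton_one]
    have inj := (H n hn).1
    have : Ideal.quotientMap (Ideal.span {f ξ ^ n}) f (by
        rw [Ideal.span_le, Set.singleton_subset_iff, SetLike.mem_coe, Ideal.mem_comap, map_pow]
        exact Ideal.subset_span rfl) (Ideal.Quotient.mk _ (a - b)) =
        Ideal.quotientMap (Ideal.span {f ξ ^ n}) f (by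
        rw [Ideal.span_le, Set.singleton_subset_iff, SetLike.mem_coe, Ideal.mem_comap, map_pow]
        exact Ideal.subset_span rfl) (Ideal.Quotient.mk _ 0) := by
      simp only [Ideal.quotientMap_mk, map_sub, map_zero, hab, sub_self]
    have := inj this
    rwa [Ideal.Quotient.eq, sub_zero] at this
  · -- range
    apply Set.eq_of_subset_of_subset
    · rintro _ ⟨r, rfl⟩
      exact RingHom.congr_fun hgf r
    intro s hs
    -- choose compatible lifts mod ξ^n
    have hlift : ∀ n : ℕ, ∃ r : R, f r - s ∈ Ideal.span {f ξ ^ n} := by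
      intro n
      rcases Nat.eq_zero_or_pos n with rfl | hn
      · exact ⟨0, by simp [Ideal.span_singleton_one]⟩
      have hr := (H n hn).2
      have : Ideal.Quotient.mk (Ideal.span {f ξ ^ n}) s ∈
          Set.range (Ideal.quotientMap (Ideal.span {f ξ ^ n}) f (by
            rw [Ideal.span_le, Set.singleton_subset_iff, SetLike.mem_coe, Ideal.mem_comap,
              map_pow]
            exact Ideal.subset_span rfl)) := by
        rw [hr]
        simp only [Set.mem_setOf_eq, Ideal.quotientMap_mk]
        exact congrArg _ hs
      obtain ⟨x, hx⟩ := this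
      obtain ⟨r, rfl⟩ := Ideal.Quotient.mk_surjective x
      refine ⟨r, ?_⟩
      rw [Ideal.quotientMap_mk] at hx
      rwa [← Ideal.Quotient.eq] 
    choose a ha using hlift
    have hcompat : ∀ {m n : ℕ}, m ≤ n → a m ≡ a n [SMOD (Ideal.span {ξ})^m • (⊤ : Submodule R R)] := by
      intro m n hmn
      rw [SModEq.sub_mem, keyR m]
      rcases Nat.eq_zero_or_pos m with rfl | hm
      · simp [Ideal.span_singleton_one]
      have inj := (H m hm).1
      have hsub : Ideal.span ({f ξ ^ n} : Set S) ≤ Ideal.span {f ξ ^ m} := by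
        rw [Ideal.span_le, Set.singleton_subset_iff, SetLike.mem_coe]
        exact Ideal.mem_span_singleton.mpr
          ⟨f ξ ^ (n - m), by rw [← pow_add, Nat.add_sub_cancel' hmn]⟩
      have : Ideal.quotientMap (Ideal.span {f ξ ^ m}) f (by
          rw [Ideal.span_le, Set.singleton_subset_iff, SetLike.mem_coe, Ideal.mem_comap, map_pow]
          exact Ideal.subset_span rfl) (Ideal.Quotient.mk _ (a m)) =
          Ideal.quotientMap (Ideal.span {f ξ ^ m}) f (by
          rw [Ideal.span_le, Set.singleton_subset_iff, SetLike.mem_coe, Ideal.mem_comap, map_pow]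
          exact Ideal.subset_span rfl) (Ideal.Quotient.mk _ (a n)) := by
        simp only [Ideal.quotientMap_mk]
        rw [Ideal.Quotient.eq]
        have h1 := ha m
        have h2 := hsub (ha n)
        have := sub_mem h1 h2
        simpa using this
      have := inj this
      rwa [Ideal.Quotient.eq] at this
    obtain ⟨L, hL⟩ := IsPrecomplete.prec (IsAdicComplete.toIsPrecomplete (I := Ideal.span {ξ}))
      hcompat
    refine ⟨L, ?_⟩
    rw [← sub_eq_zero]
    refine IsHausdorff.haus (IsAdicComplete.toIsHausdorff (I := Ideal.span {f ξ})) _ fun n => ?_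
    rw [SModEq.zero, keyS n]
    have h1 : f L - f (a n) ∈ Ideal.span {f ξ ^ n} := by
      have := (hL n)
      rw [SModEq.sub_mem, keyR n] at this
      have : f (a n - L) ∈ Ideal.span {f ξ ^ n} := by
        rcases Ideal.mem_span_singleton.mp this with ⟨c, hc⟩
        rw [hc, map_mul, map_pow]
        exact Ideal.mem_span_singleton.mpr ⟨f c, rfl⟩
      rw [map_sub] at this
      simpa using neg_mem this
    have h2 := ha n
    simpa using add_mem h1 h2
end

section
/- Let f : R → S be a homomorphism of commutative rings and g, h : S → T two ring homomorphisms with g ∘ f = h ∘ f. Let ξ ∈ R be a nonzerodivisor whose images f(ξ) ∈ S and g(f(ξ)) ∈ T are nonzerodivisors, and suppose R, S and T are each adically complete with respect to the ideal generated by (the image of) ξ. If R/(ξ) → S/(ξ) ⇉ T/(ξ) is an equalizer diagram of rings, then both R → S ⇉ T and R[1/ξ] → S[1/ξ] ⇉ T[1/ξ] are equalizer diagrams. -/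
section

variable {R S T : Type*} [CommRing R] [CommRing S] [CommRing T]

theorem isHausdorff_span_singleton_iff (a : R) :
    IsHausdorff (Ideal.span {a}) R ↔ ∀ x : R, (∀ n : ℕ, a ^ n ∣ x) → x = 0 := by
  simp only [isHausdorff_iff, SModEq.zero, smul_eq_mul, Ideal.mul_top, Ideal.span_singleton_pow,
    Ideal.mem_span_singleton]

theorem IsHausdorff.of_injective_span_singleton {φ : R →+* S} (hφ : Function.Injective φ)
    (a : R) [haus : IsHausdorff (Ideal.span {φ a}) S] : IsHausdorff (Ideal.span {a}) R := by
  rw [isHausdorff_span_singleton_iff] at haus ⊢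
  exact fun x hx ↦ hφ <| by simpa using haus (φ x) fun n ↦ by simpa using map_dvd φ (hx n)

theorem RingHom.eq_of_map_mul_eq {g h : S →+* T} {a b : S} (ha : g a ∈ nonZeroDivisors T)
    (hga : g a = h a) (hab : g (a * b) = h (a * b)) : g b = h b := by
  rw [map_mul, map_mul, ← hga] at hab
  exact (mul_cancel_left_mem_nonZeroDivisors ha).mp hab

theorem RingHom.injective_of_comap_span_singleton_le (f : R →+* S) (ξ : R)
    [IsHausdorff (Ideal.span {ξ}) R] (hfξ : f ξ ∈ nonZeroDivisors S)
    (hcomap : (Ideal.span {f ξ}).comap f ≤ Ideal.span {ξ}) : Function.Injective f := by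
  have hker : ∀ r, f r = 0 → ∃ r', r = ξ * r' ∧ f r' = 0 := by
    intro r hr
    obtain ⟨r', rfl⟩ := Ideal.mem_span_singleton.mp (hcomap (x := r) (by simp [hr]))
    exact ⟨r', rfl, (mul_left_mem_nonZeroDivisors_eq_zero_iff hfξ).mp (by simpa using hr)⟩
  rw [injective_iff_map_eq_zero]
  refine fun r hr ↦ (isHausdorff_span_singleton_iff ξ).mp ‹_› r fun n ↦ ?_
  induction n generalizing r with
  | zero => simp
  | succ n ih =>
    obtain ⟨r', rfl, hr'⟩ := hker r hr
    exact pow_succ' ξ n ▸ mul_dvd_mul_left ξ (ih r' hr')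

theorem Subring.le_range_of_forall_eq_add_mul (f : R →+* S) (ξ : R)
    [IsPrecomplete (Ideal.span {ξ}) R] [IsHausdorff (Ideal.span {f ξ}) S]
    (A : Subring S) (hfA : ∀ r, f r ∈ A)
    (happrox : ∀ a ∈ A, ∃ r, ∃ b ∈ A, a = f r + f ξ * b) : A ≤ f.range := by
  let f' := f.codRestrict A hfA
  have hmap : (Ideal.span {ξ}).map f' = Ideal.span {f' ξ} := by
    rw [Ideal.map_span, Set.image_singleton]
  have : IsHausdorff ((Ideal.span {ξ}).map f') A := hmap ▸
    IsHausdorff.of_injective_span_singleton (φ := A.subtype) Subtype.val_injective (f' ξ)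
      (haus := ‹IsHausdorff (Ideal.span {f ξ}) S›)
  have hsurj : Function.Surjective f' := by
    refine surjective_of_mk_map_comp_surjective (I := Ideal.span {ξ}) f' fun x ↦ ?_
    obtain ⟨a, rfl⟩ := Ideal.Quotient.mk_surjective x
    obtain ⟨r, b, hb, hab⟩ := happrox a a.2
    refine ⟨r, (Ideal.Quotient.mk_eq_mk_iff_sub_mem _ _).mpr ?_⟩
    rw [hmap, Ideal.mem_span_singleton']
    refine ⟨-⟨b, hb⟩, Subtype.ext ?_⟩
    push_cast [f', RingHom.codRestrict_apply]
    linear_combination hab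
  intro a ha
  obtain ⟨r, hr⟩ := hsurj ⟨a, ha⟩
  exact ⟨r, congrArg Subtype.val hr⟩

namespace IsEqualizerDiagram

section Quotient

variable {f : R →+* S} {g h : S →+* T} {I : Ideal R} {J : Ideal S} {K : Ideal T}
  {hIJ : I ≤ J.comap f} {hJKg : J ≤ K.comap g} {hJKh : J ≤ K.comap h}

theorem comap_le_of_quotientMap
    (H : IsEqualizerDiagram (Ideal.quotientMap J f hIJ) (Ideal.quotientMap K g hJKg)
      (Ideal.quotientMap K h hJKh)) : J.comap f ≤ I := by
  intro r hr
  rw [← Ideal.Quotient.eq_zero_iff_mem]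
  refine H.1 ?_
  rw [Ideal.quotientMap_mk, map_zero, Ideal.Quotient.eq_zero_iff_mem]
  exact hr

theorem exists_sub_mem_of_quotientMap
    (H : IsEqualizerDiagram (Ideal.quotientMap J f hIJ) (Ideal.quotientMap K g hJKg)
      (Ideal.quotientMap K h hJKh)) {s : S} (hs : g s = h s) : ∃ r, s - f r ∈ J := by
  obtain ⟨x, hx⟩ : Ideal.Quotient.mk J s ∈ Set.range (Ideal.quotientMap J f hIJ) := by
    rw [H.2]
    simp [Ideal.quotientMap_mk, hs]
  obtain ⟨r, rfl⟩ := Ideal.Quotient.mk_surjective x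
  rw [Ideal.quotientMap_mk, Ideal.Quotient.eq] at hx
  exact ⟨r, by simpa using J.neg_mem hx⟩

end Quotient

section Localization

variable {f : R →+* S} {g h : S →+* T}

theorem awayMap (H : IsEqualizerDiagram f g h) (hgf : g.comp f = h.comp f) (ξ : R)
    (hh : Submonoid.powers (f ξ) ≤ (Submonoid.powers (g (f ξ))).comap h) :
    IsEqualizerDiagram (Localization.awayMap f ξ) (Localization.awayMap g (f ξ))
      (IsLocalization.map (Localization.Away (g (f ξ))) h hh :
        Localization.Away (f ξ) →+* Localization.Away (g (f ξ))) := by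
  refine ⟨Localization.awayMap_injective_iff.mpr fun r hr ↦
    ⟨0, by simp [H.1 (hr.trans (map_zero f).symm)]⟩, ?_⟩
  have hgf' (r : R) : g (f r) = h (f r) := RingHom.congr_fun hgf r
  ext x
  constructor
  · rintro ⟨y, rfl⟩
    have hcomp : (Localization.awayMap g (f ξ)).comp (Localization.awayMap f ξ) =
        (IsLocalization.map (Localization.Away (g (f ξ))) h hh).comp (Localization.awayMap f ξ) :=
      IsLocalization.ringHom_ext (Submonoid.powers ξ) <| by
        ext r
        simp [IsLocalization.Away.map, IsLocalization.map_eq, hgf']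
    exact RingHom.congr_fun hcomp y
  · intro hx
    obtain ⟨n, s, hs⟩ := IsLocalization.Away.surj (f ξ) x
    have hgs : algebraMap T (Localization.Away (g (f ξ))) (g s) = algebraMap _ _ (h s) := by
      have hG := congrArg (Localization.awayMap g (f ξ)) hs
      have hH := congrArg (IsLocalization.map (Localization.Away (g (f ξ))) h hh) hs
      simp only [Set.mem_ofPred_eq, IsLocalization.Away.map, map_mul, map_pow,
        IsLocalization.map_eq] at hx hG hH
      rw [← hG, ← hH, hx, ← hgf' ξ]
    obtain ⟨m, hm⟩ := IsLocalization.Away.exists_of_eq (g (f ξ)) hgs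
    obtain ⟨r, hr⟩ : f ξ ^ m * s ∈ Set.range f := by
      rw [H.2]
      simpa [← hgf' ξ] using hm
    refine ⟨IsLocalization.mk' _ r (⟨ξ ^ (m + n), m + n, rfl⟩ : Submonoid.powers ξ), ?_⟩
    simp only [IsLocalization.Away.map, IsLocalization.map_mk']
    rw [IsLocalization.mk'_eq_iff_eq_mul]
    simp only [hr, map_mul, map_pow, pow_add, ← hs]
    ring

end Localization

end IsEqualizerDiagram

end

/-- Suppose `R → S ⇉ T` commutes, `ξ ∈ R` is a nonzerodivisor whose images in `S` and `T`
are nonzerodivisors, and `R`, `S`, `T` are adically complete with respect to the ideal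
generated by (the image of) `ξ`. If `R/(ξ) → S/(ξ) ⇉ T/(ξ)` is an equalizer diagram, then
both `R → S ⇉ T` and `R[1/ξ] → S[1/ξ] ⇉ T[1/ξ]` are equalizer diagrams. -/
theorem statement3 {R S T : Type*} [CommRing R] [CommRing S] [CommRing T]
    (f : R →+* S) (g h : S →+* T) (hgf : g.comp f = h.comp f)
    (ξ : R) (hfξ : f ξ ∈ nonZeroDivisors S)
    (hgfξ : g (f ξ) ∈ nonZeroDivisors T)
    [IsAdicComplete (Ideal.span {ξ}) R]
    [IsAdicComplete (Ideal.span {f ξ}) S]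
    (H1 : IsEqualizerDiagram
      (Ideal.quotientMap (Ideal.span {f ξ}) f (by
        rw [Ideal.span_le, Set.singleton_subset_iff, SetLike.mem_coe, Ideal.mem_comap]
        exact Ideal.subset_span rfl))
      (Ideal.quotientMap (Ideal.span {g (f ξ)}) g (by
        rw [Ideal.span_le, Set.singleton_subset_iff, SetLike.mem_coe, Ideal.mem_comap]
        exact Ideal.subset_span rfl))
      (Ideal.quotientMap (Ideal.span {g (f ξ)}) h (by
        have e : g (f ξ) = h (f ξ) := RingHom.congr_fun hgf ξ
        rw [Ideal.span_le, Set.singleton_subset_iff, SetLike.mem_coe, Ideal.mem_comap, ← e]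
        exact Ideal.subset_span rfl))) :
    IsEqualizerDiagram f g h ∧
    IsEqualizerDiagram
      (Localization.awayMap f ξ)
      (Localization.awayMap g (f ξ))
      (IsLocalization.map (Localization.Away (g (f ξ))) h
        (show Submonoid.powers (f ξ) ≤ (Submonoid.powers (g (f ξ))).comap h by
          rintro x ⟨n, rfl⟩
          refine ⟨n, ?_⟩
          have e : g (f ξ) = h (f ξ) := RingHom.congr_fun hgf ξ
          simp [map_pow, e]) :
        Localization.Away (f ξ) →+* Localization.Away (g (f ξ))) := by
  have hgf' (r : R) : g (f r) = h (f r) := RingHom.congr_fun hgf r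
  have hinj : Function.Injective f :=
    f.injective_of_comap_span_singleton_le ξ hfξ H1.comap_le_of_quotientMap
  have hrange : {s | g s = h s} ⊆ Set.range f := by
    refine Subring.le_range_of_forall_eq_add_mul f ξ (g.eqLocus h) hgf' fun s hs ↦ ?_
    obtain ⟨r, hr⟩ := H1.exists_sub_mem_of_quotientMap hs
    obtain ⟨c, hc⟩ := Ideal.mem_span_singleton'.mp hr
    refine ⟨r, c, RingHom.eq_of_map_mul_eq hgfξ (hgf' ξ) ?_, by linear_combination -hc⟩
    rw [mul_comm (f ξ), hc, map_sub, map_sub, hs, hgf']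
  have hE : IsEqualizerDiagram f g h :=
    ⟨hinj, (Set.range_subset_iff.mpr hgf').antisymm hrange⟩
  exact ⟨hE, hE.awayMap hgf ξ _⟩
end

section
/- Let A be a commutative ring, ϖ ∈ A, and let (R_i)_{i ∈ I} be a directed system of commutative A-algebras indexed by a directed partially ordered set, with transition homomorphisms f_{ij} : R_i → R_j for i ≤ j. Suppose that each R_i is Henselian along the ideal generated by the image of ϖ in R_i. Then the direct limit R = colim_i R_i is Henselian along the ideal generated by the image of ϖ in R. -/
/-!
A Henselian lifting problem over the direct limit involves finitely many elements (the
coefficients of the polynomial, the approximate root, an inverse of the derivative modulo `ϖ`)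
and finitely many relations between them. All of them already live, and all relations already
hold, in a single component `G l`, which is Henselian; the root found there maps to a root in the
limit. The Jacobson condition descends the same way: `1 + ϖ y` is a unit in the component where
`y` lives.
-/

open Polynomial Filter

theorem Ideal.Quotient.isUnit_mk_iff_exists_mul_sub_one_mem {R : Type*} [CommRing R]
    {I : Ideal R} {x : R} : IsUnit (Ideal.Quotient.mk I x) ↔ ∃ y, x * y - 1 ∈ I := by
  constructor
  · rintro ⟨v, hv⟩
    obtain ⟨y, hy⟩ := Ideal.Quotient.mk_surjective (↑v⁻¹ : R ⧸ I)
    exact ⟨y, Ideal.Quotient.eq.mp (by rw [map_mul, hy, ← hv, Units.mul_inv, map_one])⟩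
  · rintro ⟨y, hy⟩
    exact IsUnit.of_mul_eq_one (Ideal.Quotient.mk I y)
      (by rw [← map_mul, Ideal.Quotient.eq.mpr hy, map_one])

namespace Ring.DirectLimit

variable {ι : Type*} [Preorder ι] {G : ι → Type*} [∀ i, CommRing (G i)]
  {f : ∀ i j, i ≤ j → G i →+* G j}

theorem of_comp {i j : ι} (hij : i ≤ j) :
    (of G (f · · ·) j).comp (f i j hij) = of G (f · · ·) i :=
  RingHom.ext (of_f hij)

variable [IsDirectedOrder ι]

theorem eventually_exists_of [Nonempty ι] (z : DirectLimit G (f · · ·)) :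
    ∀ᶠ i in atTop, ∃ x, of G (f · · ·) i x = z := by
  obtain ⟨i, x, rfl⟩ := exists_of z
  exact eventually_atTop.2 ⟨i, fun j hij => ⟨f i j hij x, of_f hij x⟩⟩

theorem Polynomial.eventually_exists_monic_map_eq [Nonempty ι]
    (p : (DirectLimit G (f · · ·))[X]) (hp : p.Monic) :
    ∀ᶠ i in atTop, ∃ q : (G i)[X], q.Monic ∧ q.map (of G (f · · ·) i) = p := by
  rcases subsingleton_or_nontrivial (DirectLimit G (f · · ·)) with _ | _
  · exact .of_forall fun i => ⟨1, monic_one, Subsingleton.elim _ _⟩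
  obtain ⟨i, q, hq⟩ := Polynomial.exists_of p
  obtain ⟨q, hqp, -, hq⟩ := lifts_and_degree_eq_and_monic ((mem_lifts p).2 ⟨q, hq⟩) hp
  refine eventually_atTop.2 ⟨i, fun j hij => ⟨q.map (f i j hij), hq.map _, ?_⟩⟩
  rw [Polynomial.map_map, of_comp, hqp]

theorem of_mem_jacobson_bot {i : ι} {x : G i}
    (hx : ∀ j (hij : i ≤ j), f i j hij x ∈ (⊥ : Ideal (G j)).jacobson) :
    of G (f · · ·) i x ∈ (⊥ : Ideal (DirectLimit G (f · · ·))).jacobson := by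
  have : Nonempty ι := ⟨i⟩
  refine Ideal.mem_jacobson_bot.2 fun z => ?_
  obtain ⟨k, ⟨y, rfl⟩, hik⟩ := ((eventually_exists_of z).and (eventually_ge_atTop i)).exists
  rw [← of_f hik x, ← map_mul, ← map_one (of G (f · · ·) k), ← map_add]
  exact (Ideal.mem_jacobson_bot.1 (hx k hik) y).map _

theorem of_eq_of_compatible
    {ϖ : ∀ i, G i} (hϖ : ∀ i j (hij : i ≤ j), f i j hij (ϖ i) = ϖ j) (i j : ι) :
    of G (f · · ·) i (ϖ i) = of G (f · · ·) j (ϖ j) := by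
  obtain ⟨k, hik, hjk⟩ := exists_ge_ge i j
  rw [← of_f hik, ← of_f hjk, hϖ, hϖ]

theorem of_mem_span_singleton
    {ϖ : ∀ i, G i} (hϖ : ∀ i j (hij : i ≤ j), f i j hij (ϖ i) = ϖ j)
    {k : ι} {x : G k} (hx : x ∈ Ideal.span {ϖ k}) (i : ι) :
    of G (f · · ·) k x ∈ Ideal.span {of G (f · · ·) i (ϖ i)} := by
  obtain ⟨r, rfl⟩ := Ideal.mem_span_singleton'.1 hx
  rw [map_mul, of_eq_of_compatible hϖ k i]
  exact Ideal.mul_mem_left _ _ (Ideal.mem_span_singleton_self _)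

variable [DirectedSystem G fun i j h => f i j h]

theorem eventually_map_eq_zero {i : ι} {x : G i} (hx : of G (f · · ·) i x = 0) :
    ∀ᶠ j in atTop, ∀ hij : i ≤ j, f i j hij x = 0 := by
  have : Nonempty ι := ⟨i⟩
  obtain ⟨k, hik, hk⟩ := of.zero_exact hx
  refine eventually_atTop.2 ⟨k, fun j hkj hij => ?_⟩
  rw [← DirectedSystem.map_map (f := (f · · ·)) hik hkj, hk, map_zero]

theorem eventually_map_mem_span_singleton
    {ϖ : ∀ i, G i} (hϖ : ∀ i j (hij : i ≤ j), f i j hij (ϖ i) = ϖ j)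
    {i k : ι} {x : G k}
    (hx : of G (f · · ·) k x ∈ Ideal.span {of G (f · · ·) i (ϖ i)}) :
    ∀ᶠ j in atTop, ∀ hkj : k ≤ j, f k j hkj x ∈ Ideal.span {ϖ j} := by
  have : Nonempty ι := ⟨k⟩
  obtain ⟨r₀, hr₀⟩ := Ideal.mem_span_singleton'.1 hx
  obtain ⟨m, ⟨r, rfl⟩, hkm⟩ :=
    ((eventually_exists_of r₀).and (eventually_ge_atTop k)).exists
  have hzero : of G (f · · ·) m (f k m hkm x - r * ϖ m) = 0 := by
    rw [map_sub, map_mul, of_f, of_eq_of_compatible hϖ m i, hr₀, sub_self]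
  filter_upwards [eventually_map_eq_zero hzero, eventually_ge_atTop m] with j hj hmj hkj
  have hx : f k j hkj x = f m j hmj r * ϖ j := by
    rw [← DirectedSystem.map_map (f := (f · · ·)) hkm hmj, ← hϖ m j hmj, ← map_mul,
      ← sub_eq_zero, ← map_sub, hj hmj]
  exact hx ▸ Ideal.mul_mem_left _ _ (Ideal.mem_span_singleton_self _)

theorem henselianRing_span_singleton
    {ϖ : ∀ i, G i} (hϖ : ∀ i j (hij : i ≤ j), f i j hij (ϖ i) = ϖ j)
    (hHens : ∀ i, HenselianRing (G i) (Ideal.span {ϖ i})) (i₀ : ι) :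
    HenselianRing (DirectLimit G (f · · ·)) (Ideal.span {of G (f · · ·) i₀ (ϖ i₀)}) where
  jac := (Ideal.span_singleton_le_iff_mem _).2 <| of_mem_jacobson_bot fun j hij =>
    hϖ i₀ j hij ▸ (hHens j).jac (Ideal.mem_span_singleton_self _)
  is_henselian p hp a₀ hpa₀ hdp := by
    have : Nonempty ι := ⟨i₀⟩
    obtain ⟨u₀, hu₀⟩ := Ideal.Quotient.isUnit_mk_iff_exists_mul_sub_one_mem.1 hdp
    obtain ⟨k, ⟨⟨q, hq, rfl⟩, ⟨a, rfl⟩⟩, ⟨u, rfl⟩⟩ :=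
      (((Polynomial.eventually_exists_monic_map_eq p hp).and
        (eventually_exists_of a₀)).and (eventually_exists_of u₀)).exists
    rw [eval_map_apply] at hpa₀
    rw [derivative_map, eval_map_apply, ← map_mul, ← map_one (of G (f · · ·) k),
      ← map_sub] at hu₀
    obtain ⟨l, ⟨hroot, hunit⟩, hkl⟩ := (((eventually_map_mem_span_singleton hϖ hpa₀).and
      (eventually_map_mem_span_singleton hϖ hu₀)).and (eventually_ge_atTop k)).exists
    set g := f k l hkl
    have hql : (q.map g).eval (g a) ∈ Ideal.span {ϖ l} := by
      rw [eval_map_apply]; exact hroot hkl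
    have hdql :
        IsUnit (Ideal.Quotient.mk (Ideal.span {ϖ l}) ((q.map g).derivative.eval (g a))) := by
      refine Ideal.Quotient.isUnit_mk_iff_exists_mul_sub_one_mem.2 ⟨g u, ?_⟩
      rw [derivative_map, eval_map_apply, ← map_mul, ← map_one g, ← map_sub]
      exact hunit hkl
    obtain ⟨b, hb, hba⟩ := (hHens l).is_henselian _ (hq.map g) _ hql hdql
    refine ⟨of G (f · · ·) l b, ?_, ?_⟩
    · rw [IsRoot, ← of_comp hkl, ← Polynomial.map_map, eval_map_apply, hb.eq_zero, map_zero]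
    · rw [← of_f hkl a, ← map_sub]
      exact of_mem_span_singleton hϖ hba i₀

end Ring.DirectLimit

theorem statement6_general {A : Type*} [CommRing A] (ϖ : A)
    {ι : Type*} [PartialOrder ι] [IsDirected ι (· ≤ ·)]
    (G : ι → Type*) [∀ i, CommRing (G i)] [∀ i, Algebra A (G i)]
    (f : ∀ i j, i ≤ j → G i →+* G j)
    (hfA : ∀ i j (hij : i ≤ j), (f i j hij).comp (algebraMap A (G i)) = algebraMap A (G j))
    [DirectedSystem G fun i j hij => f i j hij]
    (hHens : ∀ i, HenselianRing (G i) (Ideal.span {algebraMap A (G i) ϖ}))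
    (i₀ : ι) :
    HenselianRing (Ring.DirectLimit G fun i j hij => f i j hij)
      (Ideal.span {Ring.DirectLimit.of G (fun i j hij => f i j hij) i₀
        (algebraMap A (G i₀) ϖ)}) :=
  Ring.DirectLimit.henselianRing_span_singleton
    (fun i j hij => RingHom.congr_fun (hfA i j hij) ϖ) hHens i₀

/-- Let `A` be a commutative ring, `ϖ ∈ A`, and let `(G i)` be a directed system of commutative
`A`-algebras over a directed partially ordered index set, with transition homomorphisms `f i j`.
If each `G i` is Henselian along the ideal generated by the image of `ϖ`, then the direct limit
is Henselian along the ideal generated by the image of `ϖ` (the image of `ϖ` being taken via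
the structure map from any component `i₀`). -/
theorem statement6 {A : Type*} [CommRing A] (ϖ : A)
    {ι : Type*} [PartialOrder ι] [IsDirected ι (· ≤ ·)] [Nonempty ι]
    (G : ι → Type*) [∀ i, CommRing (G i)] [∀ i, Algebra A (G i)]
    (f : ∀ i j, i ≤ j → G i →+* G j)
    (hfA : ∀ i j (hij : i ≤ j), (f i j hij).comp (algebraMap A (G i)) = algebraMap A (G j))
    [DirectedSystem G fun i j hij => f i j hij]
    (hHens : ∀ i, HenselianRing (G i) (Ideal.span {algebraMap A (G i) ϖ}))
    (i₀ : ι) :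
    HenselianRing (Ring.DirectLimit G fun i j hij => f i j hij)
      (Ideal.span {Ring.DirectLimit.of G (fun i j hij => f i j hij) i₀
        (algebraMap A (G i₀) ϖ)}) :=
  statement6_general ϖ G f hfA hHens i₀
end
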